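/- If s and t are multisets of positive integers with sum s = sum t = 12, prod s = prod t, card s = card t, and s ≠ t, then prod s = 48. -/

import Mathlib

/-!
A multiset of positive integers with sum 12 is a partition of 12, and each of its parts is at
most 12. Enumerating these partitions by the multiplicity of each part size and comparing lengths
and products shows that the only collision is `{2, 2, 2, 6}` versus `{1, 3, 4, 4}`, of product 48.
-/

def boundedPartitions (n : ℕ) : ℕ → List (Multiset ℕ)
  | 0 => if n = 0 then [0] else []
  | k + 1 => (List.range (n / (k + 1) + 1)).flatMap fun j =>
      (boundedPartitions (n - j * (k + 1)) k).map (Multiset.replicate j (k + 1) + ·)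

theorem mem_boundedPartitions_sum {k : ℕ} {s : Multiset ℕ} (hs : ∀ x ∈ s, 0 < x ∧ x ≤ k) :
    s ∈ boundedPartitions s.sum k := by
  induction k generalizing s with
  | zero =>
    obtain rfl : s = 0 := Multiset.eq_zero_of_forall_notMem fun x hx => by
      have := hs x hx; omega
    simp [boundedPartitions]
  | succ k ih =>
    set j := s.count (k + 1)
    set r := s.filter (· ≠ k + 1)
    have hsplit : Multiset.replicate j (k + 1) + r = s := by
      rw [← Multiset.filter_eq', Multiset.filter_add_not]
    have hr : ∀ x ∈ r, 0 < x ∧ x ≤ k := fun x hx => by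
      rw [Multiset.mem_filter] at hx
      have := hs x hx.1; omega
    have hsum : s.sum = j * (k + 1) + r.sum := by
      rw [← hsplit, Multiset.sum_add, Multiset.sum_replicate, smul_eq_mul]
    rw [boundedPartitions, List.mem_flatMap]
    refine ⟨j, List.mem_range.2 (Nat.lt_succ_of_le
      ((Nat.le_div_iff_mul_le k.succ_pos).2 (hsum ▸ Nat.le_add_right _ _))), ?_⟩
    rw [List.mem_map]
    exact ⟨r, by simpa only [hsum, Nat.add_sub_cancel_left] using ih hr, hsplit⟩

theorem ambiguous_prod_of_mem_boundedPartitions_twelve :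
    ∀ s ∈ boundedPartitions 12 12, ∀ t ∈ boundedPartitions 12 12,
      s.prod = t.prod → Multiset.card s = Multiset.card t → s ≠ t → s.prod = 48 := by
  set_option maxRecDepth 4000 in decide

theorem bus12_unique_ambiguous_product
    (s t : Multiset ℕ) (hs : ∀ x ∈ s, 0 < x) (ht : ∀ x ∈ t, 0 < x)
    (hsum_s : s.sum = 12) (hsum_t : t.sum = 12)
    (hprod : s.prod = t.prod) (hcard : Multiset.card s = Multiset.card t)
    (hne : s ≠ t) :
    s.prod = 48 := by
  have mem {u : Multiset ℕ} (hu : ∀ x ∈ u, 0 < x) (hsum : u.sum = 12) :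
      u ∈ boundedPartitions 12 12 :=
    hsum ▸ mem_boundedPartitions_sum fun x hx => ⟨hu x hx, hsum ▸ Multiset.le_sum_of_mem hx⟩
  exact ambiguous_prod_of_mem_boundedPartitions_twelve s (mem hs hsum_s) t (mem ht hsum_t)
    hprod hcard hne
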